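/- Let n nodes have features h_i ∈ ℝ^d and coordinates Z_i ∈ ℝ^{3×m}, and suppose messages m_{ij} = φ_m(h_i, h_j, f'(Z_{ij}), e_{ij}) are computed from pairwise E(3)-invariant quantities. Then the coordinate update Z_i' = Z_i + (1/|N(i)|) Σ_{j∈N(i)} Z_{ij} φ_Z(m_{ij}) is E(3)-equivariant: replacing each Z_k by OZ_k + t𝟙ᵀ (O ∈ O(3), t ∈ ℝ³) yields updated coordinates OZ_i' + t𝟙ᵀ. -/

import Mathlib

open Matrix BigOperators Finset

noncomputable def frob {m : ℕ} (A : Matrix (Fin m) (Fin m) ℝ) : ℝ :=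
  Real.sqrt (∑ i, ∑ j, (A i j) ^ 2)

noncomputable def gram {m : ℕ} (Z : Matrix (Fin 3) (Fin m) ℝ) :
    Matrix (Fin m) (Fin m) ℝ :=
  (frob (Zᵀ * Z))⁻¹ • (Zᵀ * Z)

def act {m : ℕ} (O : Matrix (Fin 3) (Fin 3) ℝ) (t : Fin 3 → ℝ)
    (Z : Matrix (Fin 3) (Fin m) ℝ) : Matrix (Fin 3) (Fin m) ℝ :=
  O * Z + Matrix.of (fun i _ => t i)

/-! Translations cancel in the differences `Z_i - Z_j`, which therefore only get rotated, and the
normalized Gram matrix of `O * Z` is that of `Z`; so every message is unchanged and the update,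
being affine in the coordinates, commutes with `Z ↦ O Z + t 𝟙ᵀ`. -/

section Equivariance

variable {m : ℕ} (O : Matrix (Fin 3) (Fin 3) ℝ) (t : Fin 3 → ℝ)

theorem gram_orthogonal_mul (hO : Oᵀ * O = 1) (Z : Matrix (Fin 3) (Fin m) ℝ) :
    gram (O * Z) = gram Z := by
  have hprod : (O * Z)ᵀ * (O * Z) = Zᵀ * Z := by
    rw [transpose_mul, Matrix.mul_assoc, ← Matrix.mul_assoc Oᵀ, hO, Matrix.one_mul]
  rw [_root_.gram, _root_.gram, hprod]

theorem act_sub_act (Z W : Matrix (Fin 3) (Fin m) ℝ) :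
    act O t Z - act O t W = O * (Z - W) := by
  rw [act, act, Matrix.mul_sub]
  abel

theorem act_add (Z X : Matrix (Fin 3) (Fin m) ℝ) :
    act O t (Z + X) = act O t Z + O * X := by
  rw [act, act, Matrix.mul_add]
  abel

end Equivariance

theorem coord_update_equivariant_general {n m d p : ℕ}
    (h : Fin n → (Fin d → ℝ)) (Z : Fin n → Matrix (Fin 3) (Fin m) ℝ)
    (φm : (Fin d → ℝ) → (Fin d → ℝ) → Matrix (Fin m) (Fin m) ℝ → ℝ → (Fin p → ℝ))
    (φZ : (Fin p → ℝ) → Matrix (Fin m) (Fin m) ℝ)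
    (e : Fin n → Fin n → ℝ) (N : Fin n → Finset (Fin n))
    (O : Matrix (Fin 3) (Fin 3) ℝ) (hO : Oᵀ * O = 1) (t : Fin 3 → ℝ)
    (update : (Fin n → Matrix (Fin 3) (Fin m) ℝ) → Fin n → Matrix (Fin 3) (Fin m) ℝ)
    (hupdate : ∀ W i, update W i = W i + ((N i).card : ℝ)⁻¹ •
      ∑ j ∈ N i, (W i - W j) * φZ (φm (h i) (h j) (gram (W i - W j)) (e i j)))
    (i : Fin n) :
    update (fun k => act O t (Z k)) i = act O t (update Z i) := by
  rw [hupdate, hupdate, act_add, Matrix.mul_smul, Matrix.mul_sum]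
  congr 2
  refine Finset.sum_congr rfl fun j _ => ?_
  rw [act_sub_act, gram_orthogonal_mul O hO, Matrix.mul_assoc]

theorem coord_update_equivariant {n m d p : ℕ}
    (h : Fin n → (Fin d → ℝ)) (Z : Fin n → Matrix (Fin 3) (Fin m) ℝ)
    (φm : (Fin d → ℝ) → (Fin d → ℝ) → Matrix (Fin m) (Fin m) ℝ → ℝ → (Fin p → ℝ))
    (φZ : (Fin p → ℝ) → Matrix (Fin m) (Fin m) ℝ)
    (e : Fin n → Fin n → ℝ) (N : Fin n → Finset (Fin n))
    (hN : ∀ i, (N i).Nonempty)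
    (O : Matrix (Fin 3) (Fin 3) ℝ) (hO : Oᵀ * O = 1) (t : Fin 3 → ℝ)
    (update : (Fin n → Matrix (Fin 3) (Fin m) ℝ) → Fin n → Matrix (Fin 3) (Fin m) ℝ)
    (hupdate : ∀ W i, update W i = W i + ((N i).card : ℝ)⁻¹ •
      ∑ j ∈ N i, (W i - W j) * φZ (φm (h i) (h j) (gram (W i - W j)) (e i j)))
    (i : Fin n) :
    update (fun k => act O t (Z k)) i = act O t (update Z i) :=
  coord_update_equivariant_general h Z φm φZ e N O hO t update hupdate i
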